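/- Let n ≥ 6, let F_n be the free group with basis {a_1, …, a_n}, and let λ ∈ Aut(F_n) be any Nielsen transformation λ_{ij} (i ≠ j). Let Z be the centralizer of λ in Aut(F_n). Then λ lies in the commutator subgroup of Z; equivalently, the class [λ] is trivial in H_1(Z, ℤ) = Z/[Z,Z]. -/

import Mathlib

/-!
Pick two further indices `k, l`. Let `A` act by `a_i ↦ a_k a_i`, `a_j ↦ a_k a_j a_k⁻¹`; then
`[A, λ_{kj}⁻¹] = λ_{ij} π`, where `π = ρ_{kj}⁻¹ λ_{kj}` conjugates `a_k` by `a_j`. The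
Steinberg-type relations `[λ_{kl}, ρ_{lj}] = λ_{kj}⁻¹` and `[λ_{lj}, ρ_{kl}] = ρ_{kj}` write
`π⁻¹ = λ_{kj}⁻¹ ρ_{kj}` as a product of two commutators, so `λ_{ij}` is a product of three
commutators. Each of `λ_{kj}, λ_{kl}, ρ_{lj}, λ_{lj}, ρ_{kl}` alters a generator other than
`a_i, a_j` by one other than `a_i`, hence commutes with `λ_{ij}`, and so does `A`.
-/

namespace FreeGroup

variable {α : Type*}

def mulAutOfSubst (f g : α → FreeGroup α) (hgf : ∀ x, lift g (f x) = of x)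
    (hfg : ∀ x, lift f (g x) = of x) : MulAut (FreeGroup α) :=
  MonoidHom.toMulEquiv (lift f) (lift g) (ext_hom _ _ (by simp [hgf]))
    (ext_hom _ _ (by simp [hfg]))

@[simp] lemma mulAutOfSubst_apply_of (f g hgf hfg) (x : α) :
    mulAutOfSubst f g hgf hfg (of x) = f x := by
  simp [mulAutOfSubst, MonoidHom.toMulEquiv]

@[simp] lemma mulAutOfSubst_symm_apply_of (f g hgf hfg) (x : α) :
    (mulAutOfSubst f g hgf hfg).symm (of x) = g x := by
  simp [mulAutOfSubst, MonoidHom.toMulEquiv]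

lemma mulAut_ext {e e' : MulAut (FreeGroup α)} (h : ∀ x, e (of x) = e' (of x)) : e = e' :=
  MulEquiv.toMonoidHom_injective (ext_hom _ _ h)

variable [DecidableEq α]

def nielsenLeft (i j : α) (hij : i ≠ j) : MulAut (FreeGroup α) :=
  mulAutOfSubst (fun x => if x = i then of j * of x else of x)
    (fun x => if x = i then (of j)⁻¹ * of x else of x)
    (fun x => by by_cases hx : x = i <;> simp [hx, hij.symm])
    (fun x => by by_cases hx : x = i <;> simp [hx, hij.symm])

def nielsenRight (i j : α) (hij : i ≠ j) : MulAut (FreeGroup α) :=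
  mulAutOfSubst (fun x => if x = i then of x * of j else of x)
    (fun x => if x = i then of x * (of j)⁻¹ else of x)
    (fun x => by by_cases hx : x = i <;> simp [hx, hij.symm])
    (fun x => by by_cases hx : x = i <;> simp [hx, hij.symm])

@[simp] lemma nielsenLeft_apply_of (i j hij) (x : α) :
    nielsenLeft i j hij (of x) = if x = i then of j * of x else of x :=
  mulAutOfSubst_apply_of ..

@[simp] lemma nielsenLeft_symm_apply_of (i j hij) (x : α) :
    (nielsenLeft i j hij).symm (of x) = if x = i then (of j)⁻¹ * of x else of x :=
  mulAutOfSubst_symm_apply_of ..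

@[simp] lemma nielsenRight_apply_of (i j hij) (x : α) :
    nielsenRight i j hij (of x) = if x = i then of x * of j else of x :=
  mulAutOfSubst_apply_of ..

@[simp] lemma nielsenRight_symm_apply_of (i j hij) (x : α) :
    (nielsenRight i j hij).symm (of x) = if x = i then of x * (of j)⁻¹ else of x :=
  mulAutOfSubst_symm_apply_of ..

/-- `a_i ↦ a_k a_i`, `a_j ↦ a_k a_j a_k⁻¹`, all other generators fixed. -/
def nielsenLeftConj (i j k : α) (hki : k ≠ i) (hkj : k ≠ j) : MulAut (FreeGroup α) :=
  nielsenLeft i k hki.symm * nielsenLeft j k hkj.symm * (nielsenRight j k hkj.symm)⁻¹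

open scoped commutatorElement

variable {i j k l : α}

lemma commute_nielsenLeft_nielsenLeft (hij : i ≠ j) (hkl : k ≠ l) (hki : k ≠ i) (hkj : k ≠ j)
    (hli : l ≠ i) : Commute (nielsenLeft k l hkl) (nielsenLeft i j hij) := by
  have := hij.symm; have := hkl.symm; have := hki.symm; have := hkj.symm; have := hli.symm
  refine mulAut_ext fun x => ?_
  rcases eq_or_ne x i with rfl | hxi
  · simp [*]
  · rcases eq_or_ne x k with rfl | hxk <;> simp [*]

lemma commute_nielsenRight_nielsenLeft (hij : i ≠ j) (hkl : k ≠ l) (hki : k ≠ i) (hkj : k ≠ j)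
    (hli : l ≠ i) : Commute (nielsenRight k l hkl) (nielsenLeft i j hij) := by
  have := hij.symm; have := hkl.symm; have := hki.symm; have := hkj.symm; have := hli.symm
  refine mulAut_ext fun x => ?_
  rcases eq_or_ne x i with rfl | hxi
  · simp [*]
  · rcases eq_or_ne x k with rfl | hxk <;> simp [*]

lemma commute_nielsenLeftConj_nielsenLeft (hij : i ≠ j) (hki : k ≠ i) (hkj : k ≠ j) :
    Commute (nielsenLeftConj i j k hki hkj) (nielsenLeft i j hij) := by
  have := hij.symm; have := hki.symm; have := hkj.symm
  refine mulAut_ext fun x => ?_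
  rcases eq_or_ne x i with rfl | hxi
  · simp [*, nielsenLeftConj, mul_assoc]
  · rcases eq_or_ne x j with rfl | hxj <;> simp [*, nielsenLeftConj, mul_assoc]

lemma commutator_nielsenLeft_nielsenRight_eq_nielsenLeft_inv (hkl : k ≠ l) (hlj : l ≠ j)
    (hkj : k ≠ j) :
    ⁅nielsenLeft k l hkl, nielsenRight l j hlj⁆ = (nielsenLeft k j hkj)⁻¹ := by
  have := hkl.symm; have := hlj.symm; have := hkj.symm
  refine mulAut_ext fun x => ?_
  rcases eq_or_ne x k with rfl | hxk
  · simp [*, commutatorElement_def]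
  · rcases eq_or_ne x l with rfl | hxl <;> simp [*, commutatorElement_def]

lemma commutator_nielsenLeft_nielsenRight_eq_nielsenRight (hkl : k ≠ l) (hlj : l ≠ j)
    (hkj : k ≠ j) : ⁅nielsenLeft l j hlj, nielsenRight k l hkl⁆ = nielsenRight k j hkj := by
  have := hkl.symm; have := hlj.symm; have := hkj.symm
  refine mulAut_ext fun x => ?_
  rcases eq_or_ne x k with rfl | hxk
  · simp [*, commutatorElement_def, mul_assoc]
  · rcases eq_or_ne x l with rfl | hxl <;> simp [*, commutatorElement_def]

lemma commutator_nielsenLeftConj_nielsenLeft_inv (hij : i ≠ j) (hki : k ≠ i) (hkj : k ≠ j) :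
    ⁅nielsenLeftConj i j k hki hkj, (nielsenLeft k j hkj)⁻¹⁆ =
      nielsenLeft i j hij * ((nielsenRight k j hkj)⁻¹ * nielsenLeft k j hkj) := by
  have := hij.symm; have := hki.symm; have := hkj.symm
  refine mulAut_ext fun x => ?_
  rcases eq_or_ne x i with rfl | hxi
  · simp [*, nielsenLeftConj, commutatorElement_def, mul_assoc]
  · rcases eq_or_ne x j with rfl | hxj
    · simp [*, nielsenLeftConj, commutatorElement_def, mul_assoc]
    · rcases eq_or_ne x k with rfl | hxk <;>
        simp [*, nielsenLeftConj, commutatorElement_def, mul_assoc]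

lemma nielsenLeft_eq_commutator_mul_commutator_mul_commutator (hij : i ≠ j) (hki : k ≠ i)
    (hkj : k ≠ j) (hlj : l ≠ j) (hkl : k ≠ l) :
    nielsenLeft i j hij =
      ⁅nielsenLeftConj i j k hki hkj, (nielsenLeft k j hkj)⁻¹⁆ *
        ⁅nielsenLeft k l hkl, nielsenRight l j hlj⁆ *
          ⁅nielsenLeft l j hlj, nielsenRight k l hkl⁆ := by
  rw [commutator_nielsenLeftConj_nielsenLeft_inv hij,
    commutator_nielsenLeft_nielsenRight_eq_nielsenLeft_inv _ _ hkj,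
    commutator_nielsenLeft_nielsenRight_eq_nielsenRight _ _ hkj]
  group

theorem nielsenLeft_mem_commutator_centralizer (hij : i ≠ j) (hki : k ≠ i) (hkj : k ≠ j)
    (hli : l ≠ i) (hlj : l ≠ j) (hkl : k ≠ l) :
    nielsenLeft i j hij ∈
      ⁅Subgroup.centralizer {nielsenLeft i j hij}, Subgroup.centralizer {nielsenLeft i j hij}⁆ := by
  set Z := Subgroup.centralizer {nielsenLeft i j hij}
  have mem {g} (h : Commute g (nielsenLeft i j hij)) : g ∈ Z :=
    Subgroup.mem_centralizer_singleton_iff.mpr h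
  nth_rw 1 [nielsenLeft_eq_commutator_mul_commutator_mul_commutator hij hki hkj hlj hkl]
  exact mul_mem (mul_mem
    (Subgroup.commutator_mem_commutator (mem (commute_nielsenLeftConj_nielsenLeft hij hki hkj))
      (mem (commute_nielsenLeft_nielsenLeft hij hkj hki hkj hij.symm).inv_left))
    (Subgroup.commutator_mem_commutator
      (mem (commute_nielsenLeft_nielsenLeft hij hkl hki hkj hli))
      (mem (commute_nielsenRight_nielsenLeft hij hlj hli hlj hij.symm))))
    (Subgroup.commutator_mem_commutator
      (mem (commute_nielsenLeft_nielsenLeft hij hlj hli hlj hij.symm))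
      (mem (commute_nielsenRight_nielsenLeft hij hkl hki hkj hli)))

end FreeGroup

open FreeGroup in
/-- For `n ≥ 6`, any Nielsen transformation `λ = λ_{ij}` (`i ≠ j`) of
the free group `F_n` lies in the commutator subgroup of its centralizer `Z` in
`Aut(F_n)`; equivalently, `[λ]` is trivial in `H_1(Z, ℤ) = Z/[Z,Z]`. -/
theorem stmt9 (n : ℕ) (hn : 6 ≤ n) (i j : Fin n) (hij : i ≠ j)
    (lam : MulAut (FreeGroup (Fin n)))
    (h1 : lam (FreeGroup.of i) = FreeGroup.of j * FreeGroup.of i)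
    (h2 : ∀ k : Fin n, k ≠ i → lam (FreeGroup.of k) = FreeGroup.of k) :
    lam ∈ ⁅Subgroup.centralizer {lam}, Subgroup.centralizer {lam}⁆ := by
  obtain rfl : lam = nielsenLeft i j hij := mulAut_ext fun x => by
    rcases eq_or_ne x i with rfl | hx <;> simp [*]
  have hcard : 1 < ({i, j}ᶜ : Finset (Fin n)).card := by
    have := Finset.card_le_two (a := i) (b := j)
    rw [Finset.card_compl, Fintype.card_fin]
    omega
  obtain ⟨k, hk, l, hl, hkl⟩ := Finset.one_lt_card.mp hcard
  simp only [Finset.mem_compl, Finset.mem_insert, Finset.mem_singleton, not_or] at hk hl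
  exact nielsenLeft_mem_commutator_centralizer hij hk.1 hk.2 hl.1 hl.2 hkl
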